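/- Let {ψ_j}_{j∈ℕ} be a frame for a closed subspace S of H with frame bounds c₁, c₂ > 0, and let T be a closed subspace with cos(θ_{T,S}) > 0. Define P f = Σ_j ⟨f, ψ_j⟩ ψ_j. Then for all φ ∈ T, c₁ cos²(θ_{T,S}) ‖φ‖² ≤ ⟨P φ, φ⟩ ≤ c₂ ‖φ‖². -/

import Mathlib

/-! Every `ψ j` lies in `S`, so `⟪ψ j, φ⟫ = ⟪ψ j, Q_S φ⟫` and `re ⟪Pφ, φ⟫ = ∑ |⟪ψ j, Q_S φ⟫|²`.
The frame bounds applied to `Q_S φ ∈ S` then give the claim, because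
`cos θ_{T,S} ‖φ‖ ≤ ‖Q_S φ‖ ≤ ‖φ‖` for `φ ∈ T`. -/

open Submodule

variable {H : Type*}

/-- The cosine of the subspace angle `θ_{U,W}` between subspaces `U` and `W`:
`cos θ_{U,W} = inf_{u ∈ U, ‖u‖ = 1} ‖Q_W u‖`. -/
noncomputable def cosAngle [NormedAddCommGroup H] [InnerProductSpace ℂ H]
    (U W : Submodule ℂ H) [HasOrthogonalProjection W] : ℝ :=
  sInf {r : ℝ | ∃ u ∈ U, ‖u‖ = 1 ∧ r = ‖(orthogonalProjection W u : H)‖}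

open scoped InnerProductSpace

section

variable {𝕜 E ι : Type*} [RCLike 𝕜] [NormedAddCommGroup E] [InnerProductSpace 𝕜 E]

theorem re_inner_tsum_inner_smul_self {ψ : ι → E} {f : E}
    (hsum : Summable fun j => ⟪ψ j, f⟫_𝕜 • ψ j) :
    RCLike.re ⟪∑' j, ⟪ψ j, f⟫_𝕜 • ψ j, f⟫_𝕜 = ∑' j, ‖⟪ψ j, f⟫_𝕜‖ ^ 2 := by
  have hterm : ∀ j, RCLike.re ⟪f, ⟪ψ j, f⟫_𝕜 • ψ j⟫_𝕜 = ‖⟪ψ j, f⟫_𝕜‖ ^ 2 := fun j => by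
    rw [inner_smul_right, ← inner_conj_symm f, RCLike.mul_conj, ← RCLike.ofReal_pow,
      RCLike.ofReal_re]
  have hinner : ⟪f, ∑' j, ⟪ψ j, f⟫_𝕜 • ψ j⟫_𝕜 = ∑' j, ⟪f, ⟪ψ j, f⟫_𝕜 • ψ j⟫_𝕜 :=
    (innerSL 𝕜 f).map_tsum hsum
  rw [inner_re_symm, hinner]
  exact (RCLike.re_tsum 𝕜 (hsum.mapL (innerSL 𝕜 f))).trans (tsum_congr hterm)

theorem Submodule.inner_starProjection_eq_of_mem_left (K : Submodule 𝕜 E)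
    [K.HasOrthogonalProjection] {u : E} (hu : u ∈ K) (v : E) :
    ⟪u, K.starProjection v⟫_𝕜 = ⟪u, v⟫_𝕜 := by
  rw [← inner_starProjection_left_eq_right, K.starProjection_eq_self_iff.mpr hu]

end

section

variable [NormedAddCommGroup H] [InnerProductSpace ℂ H]

theorem cosAngle_nonneg (U W : Submodule ℂ H) [W.HasOrthogonalProjection] :
    0 ≤ cosAngle U W :=
  Real.sInf_nonneg (by rintro _ ⟨u, -, -, rfl⟩; positivity)

theorem cosAngle_mul_norm_le {U W : Submodule ℂ H} [W.HasOrthogonalProjection] {φ : H}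
    (hφ : φ ∈ U) : cosAngle U W * ‖φ‖ ≤ ‖W.starProjection φ‖ := by
  rcases eq_or_ne φ 0 with rfl | hφ0
  · simp
  have hn : 0 < ‖φ‖ := norm_pos_iff.mpr hφ0
  rw [← le_inv_mul_iff₀' hn]
  refine csInf_le ⟨0, by rintro _ ⟨u, -, -, rfl⟩; positivity⟩
    ⟨(‖φ‖⁻¹ : ℂ) • φ, U.smul_mem _ hφ, ?_, ?_⟩
  · rw [norm_smul, norm_inv, Complex.norm_real, Real.norm_of_nonneg hn.le,
      inv_mul_cancel₀ hn.ne']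
  · rw [map_smul, Submodule.coe_smul, norm_smul, norm_inv, Complex.norm_real,
      Real.norm_of_nonneg hn.le]
    rfl

end

theorem stmt5_general [NormedAddCommGroup H] [InnerProductSpace ℂ H]
    (S T : Submodule ℂ H)
    [HasOrthogonalProjection S]
    (ψ : ℕ → H) (hmem : ∀ j, ψ j ∈ S)
    (c₁ c₂ : ℝ) (hc₁ : 0 < c₁) (hc₂ : 0 < c₂)
    (hframe : ∀ f ∈ S, c₁ * ‖f‖ ^ 2 ≤ ∑' j, ‖⟪ψ j, f⟫_ℂ‖ ^ 2 ∧
      ∑' j, ‖⟪ψ j, f⟫_ℂ‖ ^ 2 ≤ c₂ * ‖f‖ ^ 2)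
    (P : H →L[ℂ] H)
    (hsum : ∀ f : H, Summable fun j => ⟪ψ j, f⟫_ℂ • ψ j)
    (hP : ∀ f : H, P f = ∑' j, ⟪ψ j, f⟫_ℂ • ψ j) :
    ∀ φ ∈ T, c₁ * cosAngle T S ^ 2 * ‖φ‖ ^ 2 ≤ (⟪P φ, φ⟫_ℂ).re ∧
      (⟪P φ, φ⟫_ℂ).re ≤ c₂ * ‖φ‖ ^ 2 := by
  intro φ hφ
  set Q := S.starProjection φ
  have hre : (⟪P φ, φ⟫_ℂ).re = ∑' j, ‖⟪ψ j, Q⟫_ℂ‖ ^ 2 := by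
    simp only [hP, ← RCLike.re_to_complex, re_inner_tsum_inner_smul_self (hsum φ), Q,
      S.inner_starProjection_eq_of_mem_left (hmem _)]
  have hcos : cosAngle T S * ‖φ‖ ≤ ‖Q‖ := cosAngle_mul_norm_le hφ
  have hQ : ‖Q‖ ≤ ‖φ‖ := S.norm_starProjection_apply_le φ
  obtain ⟨hlow, hup⟩ := hframe Q (S.starProjection_apply_mem φ)
  rw [hre]
  constructor
  · calc c₁ * cosAngle T S ^ 2 * ‖φ‖ ^ 2 = c₁ * (cosAngle T S * ‖φ‖) ^ 2 := by ring
      _ ≤ c₁ * ‖Q‖ ^ 2 := by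
        have hcos₀ := cosAngle_nonneg T S
        gcongr
      _ ≤ _ := hlow
  · exact hup.trans (by gcongr)

/-- if `{ψ_j}` is a frame for the closed subspace `S` with bounds `c₁, c₂`,
`T` is a closed subspace with `cos θ_{T,S} > 0`, and `P f = Σ_j ⟨f,ψ_j⟩ψ_j`, then
`c₁ cos² θ_{T,S} ‖φ‖² ≤ ⟨Pφ, φ⟩ ≤ c₂ ‖φ‖²` for all `φ ∈ T`. -/
theorem stmt5 [NormedAddCommGroup H] [InnerProductSpace ℂ H] [CompleteSpace H]
    [TopologicalSpace.SeparableSpace H]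
    (S T : Submodule ℂ H) (hS : IsClosed (S : Set H)) (hT : IsClosed (T : Set H))
    [HasOrthogonalProjection S]
    (ψ : ℕ → H) (hmem : ∀ j, ψ j ∈ S)
    (c₁ c₂ : ℝ) (hc₁ : 0 < c₁) (hc₂ : 0 < c₂)
    (hframe : ∀ f ∈ S, c₁ * ‖f‖ ^ 2 ≤ ∑' j, ‖⟪ψ j, f⟫_ℂ‖ ^ 2 ∧
      ∑' j, ‖⟪ψ j, f⟫_ℂ‖ ^ 2 ≤ c₂ * ‖f‖ ^ 2)
    (hangle : 0 < cosAngle T S)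
    (P : H →L[ℂ] H)
    (hsum : ∀ f : H, Summable fun j => ⟪ψ j, f⟫_ℂ • ψ j)
    (hP : ∀ f : H, P f = ∑' j, ⟪ψ j, f⟫_ℂ • ψ j) :
    ∀ φ ∈ T, c₁ * cosAngle T S ^ 2 * ‖φ‖ ^ 2 ≤ (⟪P φ, φ⟫_ℂ).re ∧
      (⟪P φ, φ⟫_ℂ).re ≤ c₂ * ‖φ‖ ^ 2 :=
  stmt5_general S T ψ hmem c₁ c₂ hc₁ hc₂ hframe P hsum hP
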